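/- Under the Bradley–Terry score equations (for every j, Σ_{m≠j}(W_{jm} - σ(λ(θ_j - θ_m))) = 0, with λ > 0, σ the logistic sigmoid, W_{jm} + W_{mj} = 1), for any two models j and k: θ_j > θ_k if and only if W_j > W_k, and θ_j = θ_k if and only if W_j = W_k, where W_j = (1/(M-1)) Σ_{m≠j} W_{jm}. -/
import Mathlib

open Finset

/-- The logistic sigmoid function. -/
noncomputable def sigmoid (x : ℝ) : ℝ := 1 / (1 + Real.exp (-x))

lemma sigmoid_strictMono : StrictMono sigmoid := by
  intro x y h
  unfold sigmoid
  have h1 : (0:ℝ) < 1 + Real.exp (-y) := by positivity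
  have h2 : (0:ℝ) < 1 + Real.exp (-x) := by positivity
  rw [div_lt_div_iff₀ h2 h1]
  have := Real.exp_lt_exp.mpr (neg_lt_neg h)
  nlinarith

theorem stmt_11 (M : ℕ) (hM : 2 ≤ M) (lam : ℝ) (hlam : 0 < lam)
    (W : Fin M → Fin M → ℝ) (θ : Fin M → ℝ)
    (hW01 : ∀ j m, j ≠ m → W j m ∈ Set.Icc (0 : ℝ) 1)
    (hWcompl : ∀ j m, j ≠ m → W j m + W m j = 1)
    (hscore : ∀ j, ∑ m ∈ Finset.univ.erase j, (W j m - sigmoid (lam * (θ j - θ m))) = 0)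
    (j k : Fin M) :
    (θ j > θ k ↔
      (1 / ((M : ℝ) - 1)) * ∑ m ∈ Finset.univ.erase j, W j m
        > (1 / ((M : ℝ) - 1)) * ∑ m ∈ Finset.univ.erase k, W k m) ∧
    (θ j = θ k ↔
      (1 / ((M : ℝ) - 1)) * ∑ m ∈ Finset.univ.erase j, W j m
        = (1 / ((M : ℝ) - 1)) * ∑ m ∈ Finset.univ.erase k, W k m) := by
  have hM1 : (0:ℝ) < (M:ℝ) - 1 := by
    have : (2:ℝ) ≤ (M:ℝ) := by exact_mod_cast hM
    linarith
  have hc : (0:ℝ) < 1 / ((M:ℝ) - 1) := by positivity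
  set S : Fin M → ℝ := fun a => ∑ m ∈ Finset.univ.erase a, sigmoid (lam * (θ a - θ m)) with hS
  have hWS : ∀ a, ∑ m ∈ Finset.univ.erase a, W a m = S a := by
    intro a
    have h := hscore a
    rw [Finset.sum_sub_distrib] at h
    simp only [hS]
    linarith
  have key : ∀ a b : Fin M, θ a < θ b → S a < S b := by
    intro a b hab
    have hne : a ≠ b := by rintro rfl; exact lt_irrefl _ hab
    have hbmem : b ∈ Finset.univ.erase a := Finset.mem_erase.mpr ⟨hne.symm, mem_univ b⟩
    have hamem : a ∈ Finset.univ.erase b := Finset.mem_erase.mpr ⟨hne, mem_univ a⟩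
    have ea : S a = sigmoid (lam * (θ a - θ b)) +
        ∑ m ∈ (Finset.univ.erase a).erase b, sigmoid (lam * (θ a - θ m)) :=
      (Finset.add_sum_erase _ _ hbmem).symm
    have eb : S b = sigmoid (lam * (θ b - θ a)) +
        ∑ m ∈ (Finset.univ.erase a).erase b, sigmoid (lam * (θ b - θ m)) := by
      rw [Finset.erase_right_comm]
      exact (Finset.add_sum_erase _ _ hamem).symm
    rw [ea, eb]
    apply add_lt_add_of_lt_of_le
    · exact sigmoid_strictMono (by nlinarith)
    · apply Finset.sum_le_sum
      intro m _
      exact sigmoid_strictMono.monotone (by nlinarith)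
  have keq : ∀ a b : Fin M, θ a = θ b → S a = S b := by
    intro a b hab
    by_cases hne : a = b
    · rw [hne]
    · have hbmem : b ∈ Finset.univ.erase a := Finset.mem_erase.mpr ⟨Ne.symm hne, mem_univ b⟩
      have hamem : a ∈ Finset.univ.erase b := Finset.mem_erase.mpr ⟨hne, mem_univ a⟩
      have ea : S a = sigmoid (lam * (θ a - θ b)) +
          ∑ m ∈ (Finset.univ.erase a).erase b, sigmoid (lam * (θ a - θ m)) :=
        (Finset.add_sum_erase _ _ hbmem).symm
      have eb : S b = sigmoid (lam * (θ b - θ a)) +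
          ∑ m ∈ (Finset.univ.erase a).erase b, sigmoid (lam * (θ b - θ m)) := by
        rw [Finset.erase_right_comm]
        exact (Finset.add_sum_erase _ _ hamem).symm
      rw [ea, eb, hab]
  rw [hWS j, hWS k]
  rcases lt_trichotomy (θ j) (θ k) with h | h | h
  · have hS : S j < S k := key _ _ h
    constructor
    · constructor
      · intro h'; exact absurd h' (not_lt.mpr h.le)
      · intro h'; exact absurd ((mul_lt_mul_iff_right₀ hc).mp h') (not_lt.mpr hS.le)
    · constructor
      · intro h'; exact absurd h' (ne_of_lt h)
      · intro h'; exact absurd (mul_left_cancel₀ (ne_of_gt hc) h') (ne_of_lt hS)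
  · have hS : S j = S k := keq _ _ h
    constructor
    · constructor
      · intro h'; exact absurd h' (by simp [h])
      · intro h'; rw [hS] at h'; exact absurd h' (lt_irrefl _)
    · exact ⟨fun _ => by rw [hS], fun _ => h⟩
  · have hS : S k < S j := key _ _ h
    constructor
    · exact ⟨fun _ => (mul_lt_mul_iff_right₀ hc).mpr hS, fun _ => h⟩
    · constructor
      · intro h'; exact absurd h' (ne_of_gt h)
      · intro h'; exact absurd (mul_left_cancel₀ (ne_of_gt hc) h') (ne_of_gt hS)
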